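/- Expected approximation error bound: under the Lipschitz log conditional density assumption, for 0 < h < 1/L and any measurable f, 0 ≤ E[ℓ̂ᵇ_h(f(X),Y) − ℓ(f(X),Y)] ≤ (e−1)·B·L·h, where ℓ(t,y) = yᵀπ̂(t) and ℓ̂ᵇ_h(t,y) = (V(t) − V(t−hy))/h. -/

import Mathlib

/-!
Since `piHat t` minimizes `⟪t, ·⟫` over `Z`, it is a supergradient of the concave function
`V = plugV Z`, so `⟪y, piHat t⟫ ≤ (V t - V (t - h • y)) / h ≤ ⟪y, piHat (t - h • y)⟫`. The first
inequality is the lower bound; the second bounds the error by the expectation of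
`⟪Y, piHat (f X - h • Y) - piHat (f X)⟫`. Writing this expectation with the conditional density
and substituting `t ↦ t + h • y` turns it into `∫ ⟪y, piHat t⟫ (g (t + h • y) y - g t y) dt`,
and the Lipschitz bound on `log g` gives `|g (t + h • y) y - g t y| ≤ (exp (L h) - 1) g t y`.
So the error is at most `(exp (L h) - 1) B`, which is `≤ (e - 1) B L h` by convexity of `exp`
on `[0, 1]`.
-/

open scoped RealInnerProductSpace
open MeasureTheory

noncomputable def plugV {d : ℕ} (Z : Set (EuclideanSpace ℝ (Fin d)))
    (t : EuclideanSpace ℝ (Fin d)) : ℝ :=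
  sInf ((fun z => (inner ℝ (t) (z) : ℝ)) '' Z)

section plugV

variable {d : ℕ} {Z : Set (EuclideanSpace ℝ (Fin d))}

theorem plugV_eq_inner {t p : EuclideanSpace ℝ (Fin d)} (hp : p ∈ Z)
    (hmin : ∀ z ∈ Z, ⟪t, p⟫ ≤ ⟪t, z⟫) : plugV Z t = ⟪t, p⟫ :=
  IsLeast.csInf_eq ⟨⟨p, hp, rfl⟩, by rintro _ ⟨z, hz, rfl⟩; exact hmin z hz⟩

variable {piHat : EuclideanSpace ℝ (Fin d) → EuclideanSpace ℝ (Fin d)}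

theorem plugV_le_add_inner
    (hsel : ∀ t, piHat t ∈ Z ∧ ∀ z ∈ Z, ⟪t, piHat t⟫ ≤ ⟪t, z⟫) (s t : EuclideanSpace ℝ (Fin d)) :
    plugV Z s ≤ plugV Z t + ⟪s - t, piHat t⟫ := by
  rw [plugV_eq_inner (hsel s).1 (hsel s).2, plugV_eq_inner (hsel t).1 (hsel t).2, inner_sub_left]
  linarith [(hsel s).2 _ (hsel t).1]

theorem inner_le_plugV_sub_div
    (hsel : ∀ t, piHat t ∈ Z ∧ ∀ z ∈ Z, ⟪t, piHat t⟫ ≤ ⟪t, z⟫) {h : ℝ} (hh : 0 < h)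
    (t y : EuclideanSpace ℝ (Fin d)) :
    ⟪y, piHat t⟫ ≤ (plugV Z t - plugV Z (t - h • y)) / h := by
  have := plugV_le_add_inner hsel (t - h • y) t
  rw [sub_sub_cancel_left, inner_neg_left, real_inner_smul_left] at this
  rw [le_div_iff₀ hh]
  linarith

theorem plugV_sub_div_le_inner
    (hsel : ∀ t, piHat t ∈ Z ∧ ∀ z ∈ Z, ⟪t, piHat t⟫ ≤ ⟪t, z⟫) {h : ℝ} (hh : 0 < h)
    (t y : EuclideanSpace ℝ (Fin d)) :
    (plugV Z t - plugV Z (t - h • y)) / h ≤ ⟪y, piHat (t - h • y)⟫ := by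
  have := plugV_le_add_inner hsel t (t - h • y)
  rw [sub_sub_cancel, real_inner_smul_left] at this
  rw [div_le_iff₀ hh]
  linarith

end plugV

theorem Real.abs_exp_sub_one_le_exp_abs_sub_one (u : ℝ) :
    |Real.exp u - 1| ≤ Real.exp |u| - 1 := by
  rcases le_total 0 u with hu | hu
  · rw [abs_of_nonneg hu, abs_of_nonneg (by linarith [Real.add_one_le_exp u])]
  · rw [abs_of_nonpos hu, abs_of_nonpos (by linarith [Real.exp_le_one_iff.2 hu])]
    nlinarith [Real.exp_pos u, Real.add_one_le_exp u, Real.add_one_le_exp (-u),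
      Real.exp_neg u, mul_inv_cancel₀ (Real.exp_pos u).ne']

theorem Real.exp_sub_one_le_mul {x : ℝ} (h0 : 0 ≤ x) (h1 : x ≤ 1) :
    Real.exp x - 1 ≤ (Real.exp 1 - 1) * x := by
  have := convexOn_exp.2 (Set.mem_univ 0) (Set.mem_univ 1) (sub_nonneg.2 h1) h0 (by ring)
  simp only [smul_eq_mul, mul_zero, mul_one, zero_add, Real.exp_zero] at this
  linarith

theorem abs_sub_le_of_abs_log_sub_le {p q c : ℝ} (hp : 0 < p) (hq : 0 < q)
    (h : |Real.log p - Real.log q| ≤ c) : |p - q| ≤ (Real.exp c - 1) * q := by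
  have hpq : p - q = q * (Real.exp (Real.log p - Real.log q) - 1) := by
    rw [Real.exp_sub, Real.exp_log hp, Real.exp_log hq]
    field_simp
  rw [hpq, abs_mul, abs_of_pos hq, mul_comm]
  gcongr
  exact (Real.abs_exp_sub_one_le_exp_abs_sub_one _).trans (by gcongr)

theorem integral_sub_mul_le_of_abs_log_sub_le {E : Type*} [MeasurableSpace E] [AddGroup E]
    [MeasurableAdd E] {ν : Measure E} [ν.IsAddRightInvariant] {ρ φ : E → ℝ} {a : E} {B c : ℝ}
    (hρ : Integrable ρ ν) (hρpos : ∀ t, 0 < ρ t)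
    (hlog : ∀ t, |Real.log (ρ (t + a)) - Real.log (ρ t)| ≤ c)
    (hφ : Measurable φ) (hφB : ∀ t, |φ t| ≤ B) :
    ∫ t, (φ (t - a) - φ t) * ρ t ∂ν ≤ (Real.exp c - 1) * B * ∫ t, ρ t ∂ν := by
  have hφa : Measurable fun t => φ (t - a) := by
    simpa only [Function.comp_def, sub_eq_add_neg] using hφ.comp (measurable_add_const (-a))
  have hφρ : Integrable (fun t => φ t * ρ t) ν :=
    hρ.bdd_mul hφ.aestronglyMeasurable (ae_of_all _ hφB)
  have hφaρ : Integrable (fun t => φ (t - a) * ρ t) ν :=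
    hρ.bdd_mul hφa.aestronglyMeasurable (ae_of_all _ fun t => hφB _)
  have hφρa : Integrable (fun t => φ t * ρ (t + a)) ν :=
    (hρ.comp_add_right a).bdd_mul hφ.aestronglyMeasurable (ae_of_all _ hφB)
  have htrans : ∫ t, φ (t - a) * ρ t ∂ν = ∫ t, φ t * ρ (t + a) ∂ν := by
    rw [← integral_add_right_eq_self (fun t => φ (t - a) * ρ t) a]
    simp only [add_sub_cancel_right]
  calc ∫ t, (φ (t - a) - φ t) * ρ t ∂ν = ∫ t, φ t * (ρ (t + a) - ρ t) ∂ν := by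
        simp only [sub_mul, mul_sub]
        rw [integral_sub hφaρ hφρ, integral_sub hφρa hφρ, htrans]
    _ ≤ ∫ t, (Real.exp c - 1) * B * ρ t ∂ν := by
        refine integral_mono ((hφρa.sub hφρ).congr (ae_of_all _ fun t => (mul_sub _ _ _).symm))
          (hρ.const_mul _) fun t => ?_
        have hρ_diff := abs_sub_le_of_abs_log_sub_le (hρpos _) (hρpos t) (hlog t)
        calc φ t * (ρ (t + a) - ρ t) ≤ |φ t| * |ρ (t + a) - ρ t| :=
              (le_abs_self _).trans (abs_mul _ _).le
          _ ≤ B * ((Real.exp c - 1) * ρ t) :=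
              mul_le_mul (hφB t) hρ_diff (abs_nonneg _) ((abs_nonneg _).trans (hφB t))
          _ = (Real.exp c - 1) * B * ρ t := by ring
    _ = (Real.exp c - 1) * B * ∫ t, ρ t ∂ν := integral_const_mul _ _

section CondDensity

variable {Ω E T : Type*} [MeasurableSpace Ω] [MeasurableSpace E] [MeasurableSpace T]

/-- `g t y` is a density, with respect to `ν`, of the law of `F` given `Y = y`, tested against
bounded measurable functions. -/
def HasCondDensity (μ : Measure Ω) (ν : Measure E) (F : Ω → E) (Y : Ω → T) (g : E → T → ℝ) :
    Prop :=
  ∀ ψ : E → T → ℝ, Measurable (Function.uncurry ψ) → (∃ C, ∀ t y, |ψ t y| ≤ C) →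
    ∫ ω, ψ (F ω) (Y ω) ∂μ = ∫ ω, ∫ t, ψ t (Y ω) * g t (Y ω) ∂ν ∂μ

variable {μ : Measure Ω} {ν : Measure E} {F : Ω → E} {Y : Ω → T} {g : E → T → ℝ}

theorem HasCondDensity.ae_integrable [IsFiniteMeasure μ] [SFinite ν]
    (hdens : HasCondDensity μ ν F Y g) (hg : Measurable (Function.uncurry g))
    (hY : Measurable Y) : ∀ᵐ ω ∂μ, Integrable (fun t => g t (Y ω)) ν := by
  set S := {y | Integrable (fun t => g t y) ν}
  have hS : MeasurableSet S :=
    measurableSet_integrable (f := fun y t => g t y) (hg.comp measurable_swap).stronglyMeasurable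
  -- Off `S` the Bochner integral of the slice is `0`, so testing against `1_{Sᶜ}` kills `Y ⁻¹' Sᶜ`.
  have htest := hdens (fun _ y => Sᶜ.indicator 1 y)
    ((measurable_one.indicator hS.compl).comp measurable_snd)
    ⟨1, fun _ y => by by_cases hy : y ∈ Sᶜ <;> simp [hy]⟩
  have hslice : ∀ ω, ∫ t, Sᶜ.indicator 1 (Y ω) * g t (Y ω) ∂ν = 0 := by
    intro ω
    rw [integral_const_mul]
    by_cases hω : Y ω ∈ S
    · simp [hω]
    · rw [integral_undef hω, mul_zero]
  simp only [hslice, integral_zero] at htest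
  have hmass : μ.real (Y ⁻¹' Sᶜ) = 0 := by
    rw [← integral_indicator_one (hY hS.compl), ← htest]
    rfl
  exact ae_iff.2 ((measureReal_eq_zero_iff (measure_ne_top _ _)).1 hmass)

theorem HasCondDensity.integral_le [IsProbabilityMeasure μ] [SFinite ν]
    (hdens : HasCondDensity μ ν F Y g) (hg : Measurable (Function.uncurry g))
    (hF : Measurable F) (hY : Measurable Y) {ψ : E → T → ℝ}
    (hψ : Measurable (Function.uncurry ψ)) {C : ℝ} (hψC : ∀ t y, |ψ t y| ≤ C) {K : ℝ}
    (hslice : ∀ y, Integrable (fun t => g t y) ν →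
      ∫ t, ψ t y * g t y ∂ν ≤ K * ∫ t, g t y ∂ν) :
    ∫ ω, ψ (F ω) (Y ω) ∂μ ≤ K := by
  have hψF : Integrable (fun ω => ψ (F ω) (Y ω)) μ :=
    .of_bound (hψ.comp (hF.prodMk hY)).aestronglyMeasurable C (ae_of_all _ fun _ => hψC _ _)
  have htest := hdens (fun t y => ψ t y - K) (hψ.sub_const K)
    ⟨C + |K|, fun t y => (abs_sub _ _).trans (by gcongr; exact hψC t y)⟩
  rw [integral_sub hψF (integrable_const K), integral_const, probReal_univ, one_smul] at htest
  have hnonpos : ∫ ω, ∫ t, (ψ t (Y ω) - K) * g t (Y ω) ∂ν ∂μ ≤ 0 := by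
    refine integral_nonpos_of_ae ?_
    filter_upwards [hdens.ae_integrable hg hY] with ω hω
    have hψg : Integrable (fun t => ψ t (Y ω) * g t (Y ω)) ν :=
      hω.bdd_mul (hψ.comp (measurable_id.prodMk measurable_const)).aestronglyMeasurable
        (ae_of_all _ fun _ => hψC _ _)
    simp only [sub_mul]
    rw [integral_sub hψg (hω.const_mul K), integral_const_mul]
    exact sub_nonpos.2 (hslice _ hω)
  linarith

end CondDensity

section innerIncrement

variable {E : Type*} [NormedAddCommGroup E] [InnerProductSpace ℝ E]

theorem abs_inner_le_of_norm_le_one {x y : E} {B : ℝ} (hx : ‖x‖ ≤ 1) (hy : ‖y‖ ≤ B) :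
    |⟪x, y⟫| ≤ B :=
  (abs_real_inner_le_norm x y).trans
    ((mul_le_mul hx hy (norm_nonneg _) zero_le_one).trans_eq (one_mul B))

/-- The cut-off at `‖y‖ ≤ 1` keeps it bounded, as the test functions of `HasCondDensity` must be. -/
noncomputable def innerIncrement (piHat : E → E) (h : ℝ) (t y : E) : ℝ :=
  if ‖y‖ ≤ 1 then ⟪y, piHat (t - h • y)⟫ - ⟪y, piHat t⟫ else 0

variable {piHat : E → E} {h B : ℝ}

theorem measurable_innerIncrement [MeasurableSpace E] [BorelSpace E] [SecondCountableTopology E]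
    (hpi : Measurable piHat) : Measurable (Function.uncurry (innerIncrement piHat h)) :=
  Measurable.ite (measurableSet_le measurable_snd.norm measurable_const)
    ((measurable_snd.inner (hpi.comp (measurable_fst.sub (measurable_snd.const_smul h)))).sub
      (measurable_snd.inner (hpi.comp measurable_fst))) measurable_const

theorem abs_innerIncrement_le (hB : 0 ≤ B) (hpiB : ∀ t, ‖piHat t‖ ≤ B) (t y : E) :
    |innerIncrement piHat h t y| ≤ 2 * B := by
  by_cases hy : ‖y‖ ≤ 1
  · rw [innerIncrement, if_pos hy]
    linarith [abs_sub ⟪y, piHat (t - h • y)⟫ ⟪y, piHat t⟫,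
      abs_inner_le_of_norm_le_one hy (hpiB (t - h • y)), abs_inner_le_of_norm_le_one hy (hpiB t)]
  · rw [innerIncrement, if_neg hy, abs_zero]
    linarith

theorem integral_innerIncrement_mul_le [MeasurableSpace E] [BorelSpace E]
    [SecondCountableTopology E] {ν : Measure E} [ν.IsAddRightInvariant] {ρ : E → ℝ} {L : ℝ}
    (hB : 0 ≤ B) (hpiB : ∀ t, ‖piHat t‖ ≤ B) (hpi : Measurable piHat) (hL : 0 ≤ L) (hh : 0 ≤ h)
    (hρ : Integrable ρ ν) (hρpos : ∀ t, 0 < ρ t)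
    (hlog : ∀ t t', |Real.log (ρ t') - Real.log (ρ t)| ≤ L * ‖t' - t‖) (y : E) :
    ∫ t, innerIncrement piHat h t y * ρ t ∂ν ≤ (Real.exp (L * h) - 1) * B * ∫ t, ρ t ∂ν := by
  by_cases hy : ‖y‖ ≤ 1
  · simp only [innerIncrement, if_pos hy]
    refine integral_sub_mul_le_of_abs_log_sub_le (φ := fun t => ⟪y, piHat t⟫) hρ hρpos
      (fun t => (hlog t _).trans ?_) (measurable_const.inner hpi)
      (fun t => abs_inner_le_of_norm_le_one hy (hpiB t))
    rw [add_sub_cancel_left, norm_smul, Real.norm_of_nonneg hh]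
    gcongr
    exact mul_le_of_le_one_right hh hy
  · simp only [innerIncrement, if_neg hy, zero_mul, integral_zero]
    have := Real.one_le_exp (mul_nonneg hL hh)
    exact mul_nonneg (by nlinarith) (integral_nonneg fun t => (hρpos t).le)

end innerIncrement

theorem plugV_sub_div_sub_inner_le_innerIncrement {d : ℕ} {Z : Set (EuclideanSpace ℝ (Fin d))}
    {piHat : EuclideanSpace ℝ (Fin d) → EuclideanSpace ℝ (Fin d)}
    (hsel : ∀ t, piHat t ∈ Z ∧ ∀ z ∈ Z, ⟪t, piHat t⟫ ≤ ⟪t, z⟫) {h : ℝ} (hh : 0 < h)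
    {y : EuclideanSpace ℝ (Fin d)} (hy : ‖y‖ ≤ 1) (t : EuclideanSpace ℝ (Fin d)) :
    (plugV Z t - plugV Z (t - h • y)) / h - ⟪y, piHat t⟫ ≤ innerIncrement piHat h t y := by
  rw [innerIncrement, if_pos hy]
  exact sub_le_sub_right (plugV_sub_div_le_inner hsel hh t y) _

theorem expected_approximation_error_general {d : ℕ}
    {Ω : Type*} [MeasurableSpace Ω] (μ : Measure Ω) [IsProbabilityMeasure μ]
    {α : Type*} [MeasurableSpace α]
    (Z : Set (EuclideanSpace ℝ (Fin d)))
    (B L h : ℝ) (hB : 0 ≤ B) (hZB : ∀ z ∈ Z, ‖z‖ ≤ B)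
    (hL : 0 < L) (hh : 0 < h) (hhL : h < 1 / L)
    (X : Ω → α) (hX : Measurable X)
    (Y : Ω → EuclideanSpace ℝ (Fin d)) (hY : Measurable Y)
    (hYbdd : ∀ᵐ ω ∂μ, ‖Y ω‖ ≤ 1)
    (f : α → EuclideanSpace ℝ (Fin d)) (hf : Measurable f)
    (piHat : EuclideanSpace ℝ (Fin d) → EuclideanSpace ℝ (Fin d))
    (hpiMeas : Measurable piHat)
    (hpiSel : ∀ t, piHat t ∈ Z ∧ ∀ z ∈ Z, (inner ℝ (t) (piHat t) : ℝ) ≤ (inner ℝ (t) (z) : ℝ))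
    -- g t y is the conditional density of f(X) given Y = y
    (g : EuclideanSpace ℝ (Fin d) → EuclideanSpace ℝ (Fin d) → ℝ)
    (hgMeas : Measurable (Function.uncurry g))
    (hgPos : ∀ t y, 0 < g t y)
    (hgLip : ∀ y t t', |Real.log (g t' y) - Real.log (g t y)| ≤ L * ‖t' - t‖)
    (hdens : ∀ ψ : EuclideanSpace ℝ (Fin d) → EuclideanSpace ℝ (Fin d) → ℝ,
      Measurable (Function.uncurry ψ) → (∃ C, ∀ t y, |ψ t y| ≤ C) →
      ∫ ω, ψ (f (X ω)) (Y ω) ∂μ = ∫ ω, (∫ t, ψ t (Y ω) * g t (Y ω)) ∂μ) :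
    0 ≤ ∫ ω, ((plugV Z (f (X ω)) - plugV Z (f (X ω) - h • Y ω)) / h
          - (inner ℝ (Y ω) (piHat (f (X ω))) : ℝ)) ∂μ ∧
    ∫ ω, ((plugV Z (f (X ω)) - plugV Z (f (X ω) - h • Y ω)) / h
          - (inner ℝ (Y ω) (piHat (f (X ω))) : ℝ)) ∂μ ≤ (Real.exp 1 - 1) * B * L * h := by
  have hpiB : ∀ t, ‖piHat t‖ ≤ B := fun t => hZB _ (hpiSel t).1
  have hF : Measurable fun ω => f (X ω) := hf.comp hX
  have hLh : L * h ≤ 1 := by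
    rw [lt_div_iff₀ hL] at hhL
    linarith
  refine ⟨integral_nonneg fun ω => sub_nonneg.2 (inner_le_plugV_sub_div hpiSel hh _ _), ?_⟩
  calc _ ≤ ∫ ω, innerIncrement piHat h (f (X ω)) (Y ω) ∂μ := by
        refine integral_mono_of_nonneg
          (ae_of_all _ fun ω => sub_nonneg.2 (inner_le_plugV_sub_div hpiSel hh _ _))
          (.of_bound ((measurable_innerIncrement hpiMeas).comp (hF.prodMk hY)).aestronglyMeasurable
            (2 * B) (ae_of_all _ fun ω => abs_innerIncrement_le hB hpiB _ _)) ?_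
        filter_upwards [hYbdd] with ω hω
        exact plugV_sub_div_sub_inner_le_innerIncrement hpiSel hh hω _
    _ ≤ (Real.exp (L * h) - 1) * B :=
        HasCondDensity.integral_le (F := fun ω => f (X ω)) hdens hgMeas hF hY
          (measurable_innerIncrement hpiMeas) (abs_innerIncrement_le hB hpiB)
          fun y hgy => integral_innerIncrement_mul_le hB hpiB hpiMeas hL.le hh.le hgy
            (fun t => hgPos t y) (hgLip y) y
    _ ≤ (Real.exp 1 - 1) * B * L * h := by
        have := Real.exp_sub_one_le_mul (by positivity) hLh
        nlinarith

theorem expected_approximation_error {d : ℕ}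
    {Ω : Type*} [MeasurableSpace Ω] (μ : Measure Ω) [IsProbabilityMeasure μ]
    {α : Type*} [MeasurableSpace α]
    (Z : Set (EuclideanSpace ℝ (Fin d))) (hne : Z.Nonempty) (hc : IsCompact Z)
    (B L h : ℝ) (hB : 0 ≤ B) (hZB : ∀ z ∈ Z, ‖z‖ ≤ B)
    (hL : 0 < L) (hh : 0 < h) (hhL : h < 1 / L)
    (X : Ω → α) (hX : Measurable X)
    (Y : Ω → EuclideanSpace ℝ (Fin d)) (hY : Measurable Y)
    (hYbdd : ∀ᵐ ω ∂μ, ‖Y ω‖ ≤ 1)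
    (f : α → EuclideanSpace ℝ (Fin d)) (hf : Measurable f)
    (piHat : EuclideanSpace ℝ (Fin d) → EuclideanSpace ℝ (Fin d))
    (hpiMeas : Measurable piHat)
    (hpiSel : ∀ t, piHat t ∈ Z ∧ ∀ z ∈ Z, (inner ℝ (t) (piHat t) : ℝ) ≤ (inner ℝ (t) (z) : ℝ))
    -- g t y is the conditional density of f(X) given Y = y
    (g : EuclideanSpace ℝ (Fin d) → EuclideanSpace ℝ (Fin d) → ℝ)
    (hgMeas : Measurable (Function.uncurry g))
    (hgPos : ∀ t y, 0 < g t y)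
    (hgLip : ∀ y t t', |Real.log (g t' y) - Real.log (g t y)| ≤ L * ‖t' - t‖)
    (hdens : ∀ ψ : EuclideanSpace ℝ (Fin d) → EuclideanSpace ℝ (Fin d) → ℝ,
      Measurable (Function.uncurry ψ) → (∃ C, ∀ t y, |ψ t y| ≤ C) →
      ∫ ω, ψ (f (X ω)) (Y ω) ∂μ = ∫ ω, (∫ t, ψ t (Y ω) * g t (Y ω)) ∂μ) :
    0 ≤ ∫ ω, ((plugV Z (f (X ω)) - plugV Z (f (X ω) - h • Y ω)) / h
          - (inner ℝ (Y ω) (piHat (f (X ω))) : ℝ)) ∂μ ∧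
    ∫ ω, ((plugV Z (f (X ω)) - plugV Z (f (X ω) - h • Y ω)) / h
          - (inner ℝ (Y ω) (piHat (f (X ω))) : ℝ)) ∂μ ≤ (Real.exp 1 - 1) * B * L * h :=
  expected_approximation_error_general μ Z B L h hB hZB hL hh hhL X hX Y hY hYbdd f hf piHat hpiMeas
    hpiSel g hgMeas hgPos hgLip hdens
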